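/- Let q·η^{(N)}-type functions be defined by s₂(z) = −2^{−D/2}·(η^{(N)}(z)/η^{(N)}(2z))^s where η^{(N)}(z) = ∏_{d|N} η(dz). Then the logarithmic derivative q·s₂′(z)/s₂(z) (with respect to q = e^{πiz}) has all coefficients nonpositive. -/

import Mathlib

open PowerSeries Finset

noncomputable def LD (f : PowerSeries ℚ) : PowerSeries ℚ :=
  (X : PowerSeries ℚ) * (PowerSeries.derivative ℚ f) * f⁻¹

lemma LD_mul {f g : PowerSeries ℚ} (hf : constantCoeff f ≠ 0)
    (hg : constantCoeff g ≠ 0) : LD (f * g) = LD f + LD g := by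
  have hf1 : f * f⁻¹ = 1 := by
    rw [mul_comm]; exact PowerSeries.inv_mul_cancel f hf
  have hg1 : g * g⁻¹ = 1 := by
    rw [mul_comm]; exact PowerSeries.inv_mul_cancel g hg
  unfold LD
  rw [PowerSeries.mul_inv_rev, Derivation.leibniz, smul_eq_mul, smul_eq_mul]
  linear_combination (X * (PowerSeries.derivative ℚ g) * g⁻¹) * hf1 +
    (X * (PowerSeries.derivative ℚ f) * f⁻¹) * hg1

lemma LD_one : LD 1 = 0 := by
  unfold LD
  rw [Derivation.map_one_eq_zero]
  ring

lemma LD_inv {f : PowerSeries ℚ} (hf : constantCoeff f ≠ 0) : LD f⁻¹ = -LD f := by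
  have h0 : LD (f * f⁻¹) = LD f + LD f⁻¹ := by
    apply LD_mul hf
    rw [PowerSeries.constantCoeff_inv]
    exact inv_ne_zero hf
  have h1 : f * f⁻¹ = 1 := by
    rw [mul_comm]; exact PowerSeries.inv_mul_cancel f hf
  rw [h1, LD_one] at h0
  linear_combination -h0

lemma LD_pow {f : PowerSeries ℚ} (hf : constantCoeff f ≠ 0) (k : ℕ) :
    LD (f ^ k) = k • LD f := by
  induction k with
  | zero => simpa using LD_one
  | succ k ih =>
      rw [pow_succ, LD_mul _ hf, ih, succ_nsmul]
      · simpa using pow_ne_zero k hf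

lemma LD_prod {ι : Type*} (t : Finset ι) (f : ι → PowerSeries ℚ)
    (hf : ∀ i ∈ t, constantCoeff (f i) ≠ 0) :
    LD (∏ i ∈ t, f i) = ∑ i ∈ t, LD (f i) := by
  induction t using Finset.cons_induction with
  | empty => simpa using LD_one
  | cons a t ha ih =>
      rw [Finset.prod_cons, Finset.sum_cons, LD_mul (hf a (Finset.mem_cons_self a t)),
        ih fun i hi => hf i (Finset.mem_cons_of_mem hi)]
      · rw [map_prod]
        exact Finset.prod_ne_zero_iff.2 fun i hi => hf i (Finset.mem_cons_of_mem hi)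

lemma constC_one_sub_X_pow (k : ℕ) (hk : 1 ≤ k) :
    constantCoeff (1 - (X : PowerSeries ℚ) ^ k) = 1 := by
  rw [map_sub, map_one, map_pow, PowerSeries.constantCoeff_X, zero_pow (by omega), sub_zero]

lemma inv_one_sub_X_pow (k : ℕ) (hk : 1 ≤ k) :
    (1 - (X : PowerSeries ℚ) ^ k)⁻¹ = PowerSeries.mk fun n => if k ∣ n then 1 else 0 := by
  symm
  rw [PowerSeries.eq_inv_iff_mul_eq_one (by rw [constC_one_sub_X_pow k hk]; norm_num)]
  ext n
  rw [mul_comm, sub_mul, one_mul, map_sub, PowerSeries.coeff_X_pow_mul', coeff_mk,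
    PowerSeries.coeff_one]
  by_cases hkn : k ≤ n
  · rw [if_pos hkn, coeff_mk]
    have hne : n ≠ 0 := by omega
    rw [if_neg hne]
    by_cases hd : k ∣ n
    · rw [if_pos hd, if_pos (Nat.dvd_sub hd dvd_rfl), sub_self]
    · rw [if_neg hd, if_neg
        (fun hcon => hd (by have := Nat.dvd_add hcon (dvd_refl k)
                            rwa [Nat.sub_add_cancel hkn] at this))]
      norm_num
  · rw [if_neg hkn]
    by_cases h0 : n = 0
    · subst h0
      rw [if_pos (dvd_zero k), if_pos rfl]
      norm_num
    · rw [if_neg h0, if_neg (fun hd => hkn (Nat.le_of_dvd (by omega) hd)), sub_zero]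

lemma LD_one_sub_X_pow (k : ℕ) (hk : 1 ≤ k) :
    LD (1 - (X : PowerSeries ℚ) ^ k) =
      (-(k : ℚ)) • ((X : PowerSeries ℚ) ^ k * (1 - (X : PowerSeries ℚ) ^ k)⁻¹) := by
  unfold LD
  rw [map_sub, Derivation.map_one_eq_zero, zero_sub, Derivation.leibniz_pow,
    PowerSeries.derivative_X, smul_eq_mul, mul_one, nsmul_eq_mul,
    PowerSeries.smul_eq_C_mul, map_neg]
  have hx : (X : PowerSeries ℚ) * X ^ (k - 1) = X ^ k := by
    conv_rhs => rw [show k = (k - 1) + 1 by omega]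
    rw [pow_succ, mul_comm]
  have hc : ((k : ℕ) : PowerSeries ℚ) = PowerSeries.C (k : ℚ) := by
    simp
  rw [hc]
  linear_combination (-(PowerSeries.C (k : ℚ)) * (1 - (X : PowerSeries ℚ) ^ k)⁻¹) * hx

lemma coeff_LD_one_sub_X_pow (k n : ℕ) (hk : 1 ≤ k) (hn : 1 ≤ n) :
    PowerSeries.coeff (R := ℚ) n (LD (1 - (X : PowerSeries ℚ) ^ k)) =
      if k ∣ n then -(k : ℚ) else 0 := by
  rw [LD_one_sub_X_pow k hk, map_smul, inv_one_sub_X_pow k hk, smul_eq_mul,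
    PowerSeries.coeff_X_pow_mul']
  by_cases hd : k ∣ n
  · have hkn : k ≤ n := Nat.le_of_dvd (by omega) hd
    rw [if_pos hkn, coeff_mk, if_pos (Nat.dvd_sub hd dvd_rfl), mul_one, if_pos hd]
  · rw [if_neg hd]
    by_cases hkn : k ≤ n
    · rw [if_pos hkn, coeff_mk, if_neg, mul_zero]
      intro hcon
      exact hd (by have := Nat.dvd_add hcon (dvd_refl k); rwa [Nat.sub_add_cancel hkn] at this)
    · rw [if_neg hkn, mul_zero]

/-- `s₂(z) = −2^{−D/2}·(η^{(N)}(z)/η^{(N)}(2z))^s` with `η^{(N)}(z) = ∏_{d∣N} η(dz)` has, by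
the product expansion, the form `−2^{−D/2}·q^{−a}·F(q)` with `a = s·σ(N)/12 > 0` and
`F = ∏_{d∣N}∏_{m≥1}((1−q^{2dm})/(1−q^{4dm}))^s`.  Its logarithmic derivative `q·s₂′/s₂`
is `−a + q·F′/F`, and all its `q`-coefficients are nonpositive:  the coefficient of `qⁿ` of
`q·F′/F` is at most `a` for `n = 0` and at most `0` for `n ≥ 1`.  (Truncating the product at
`m ≤ n` does not change the `n`-th coefficient.) -/
theorem logDeriv_s2_nonpos (N s : ℕ) (hN : Squarefree N) (hN0 : 0 < N) (hs : 0 < s)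
    (n : ℕ) :
    PowerSeries.coeff (R := ℚ) n
      ((X : PowerSeries ℚ) *
        (PowerSeries.derivative ℚ
          (∏ d ∈ N.divisors, ∏ m ∈ Finset.Icc 1 n,
            ((1 - (X : PowerSeries ℚ) ^ (2 * d * m)) *
              (1 - (X : PowerSeries ℚ) ^ (4 * d * m))⁻¹) ^ s)) *
        (∏ d ∈ N.divisors, ∏ m ∈ Finset.Icc 1 n,
            ((1 - (X : PowerSeries ℚ) ^ (2 * d * m)) *
              (1 - (X : PowerSeries ℚ) ^ (4 * d * m))⁻¹) ^ s)⁻¹)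
      ≤ if n = 0 then (s : ℚ) * (∑ d ∈ N.divisors, (d : ℚ)) / 12 else 0 := by
  by_cases hn0 : n = 0
  · subst hn0
    rw [if_pos rfl]
    have h0 : PowerSeries.coeff (R := ℚ) 0
        ((X : PowerSeries ℚ) * (PowerSeries.derivative ℚ
          (∏ d ∈ N.divisors, ∏ m ∈ Finset.Icc 1 0,
            ((1 - (X : PowerSeries ℚ) ^ (2 * d * m)) *
              (1 - (X : PowerSeries ℚ) ^ (4 * d * m))⁻¹) ^ s)) *
        (∏ d ∈ N.divisors, ∏ m ∈ Finset.Icc 1 0,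
            ((1 - (X : PowerSeries ℚ) ^ (2 * d * m)) *
              (1 - (X : PowerSeries ℚ) ^ (4 * d * m))⁻¹) ^ s)⁻¹) = 0 := by
      rw [PowerSeries.coeff_zero_eq_constantCoeff, map_mul, map_mul,
        PowerSeries.constantCoeff_X, zero_mul, zero_mul]
    rw [h0]
    have : (0:ℚ) ≤ (s : ℚ) * (∑ d ∈ N.divisors, (d : ℚ)) / 12 := by
      apply div_nonneg _ (by norm_num)
      apply mul_nonneg (by positivity)
      exact Finset.sum_nonneg fun d _ => by positivity
    exact this
  · rw [if_neg hn0]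
    have hn1 : 1 ≤ n := by omega
    have hG : ∀ d ∈ N.divisors, ∀ m ∈ Finset.Icc 1 n,
        constantCoeff ((1 - (X : PowerSeries ℚ) ^ (2 * d * m)) *
          (1 - (X : PowerSeries ℚ) ^ (4 * d * m))⁻¹) ≠ 0 := by
      intro d hd m hm
      have hd1 : 1 ≤ d := Nat.pos_of_mem_divisors hd
      have hm1 : 1 ≤ m := (Finset.mem_Icc.1 hm).1
      rw [map_mul, PowerSeries.constantCoeff_inv,
        constC_one_sub_X_pow _ (by nlinarith), constC_one_sub_X_pow _ (by nlinarith)]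
      norm_num
    have hrw : (X : PowerSeries ℚ) *
        (PowerSeries.derivative ℚ
          (∏ d ∈ N.divisors, ∏ m ∈ Finset.Icc 1 n,
            ((1 - (X : PowerSeries ℚ) ^ (2 * d * m)) *
              (1 - (X : PowerSeries ℚ) ^ (4 * d * m))⁻¹) ^ s)) *
        (∏ d ∈ N.divisors, ∏ m ∈ Finset.Icc 1 n,
            ((1 - (X : PowerSeries ℚ) ^ (2 * d * m)) *
              (1 - (X : PowerSeries ℚ) ^ (4 * d * m))⁻¹) ^ s)⁻¹
        = LD (∏ d ∈ N.divisors, ∏ m ∈ Finset.Icc 1 n,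
            ((1 - (X : PowerSeries ℚ) ^ (2 * d * m)) *
              (1 - (X : PowerSeries ℚ) ^ (4 * d * m))⁻¹) ^ s) := rfl
    rw [hrw, LD_prod _ _ (fun d hd => by
      rw [map_prod]
      exact Finset.prod_ne_zero_iff.2 fun m hm => by
        rw [map_pow]; exact pow_ne_zero _ (hG d hd m hm)), map_sum]
    apply Finset.sum_nonpos
    intro d hd
    have hd1 : 1 ≤ d := Nat.pos_of_mem_divisors hd
    rw [LD_prod _ _ (fun m hm => by
      rw [map_pow]; exact pow_ne_zero _ (hG d hd m hm)), map_sum]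
    have hterm : ∀ m ∈ Finset.Icc 1 n,
        PowerSeries.coeff (R := ℚ) n (LD (((1 - (X : PowerSeries ℚ) ^ (2 * d * m)) *
          (1 - (X : PowerSeries ℚ) ^ (4 * d * m))⁻¹) ^ s)) =
        (s : ℚ) * ((if 4 * d * m ∣ n then ((4 * d * m : ℕ) : ℚ) else 0) -
          (if 2 * d * m ∣ n then ((2 * d * m : ℕ) : ℚ) else 0)) := by
      intro m hm
      have hm1 : 1 ≤ m := (Finset.mem_Icc.1 hm).1
      have h2 : 1 ≤ 2 * d * m := by nlinarith
      have h4 : 1 ≤ 4 * d * m := by nlinarith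
      have hc2 : constantCoeff (1 - (X : PowerSeries ℚ) ^ (2 * d * m)) ≠ 0 := by
        rw [constC_one_sub_X_pow _ h2]; norm_num
      have hc4 : constantCoeff (1 - (X : PowerSeries ℚ) ^ (4 * d * m)) ≠ 0 := by
        rw [constC_one_sub_X_pow _ h4]; norm_num
      have hc4' : constantCoeff ((1 - (X : PowerSeries ℚ) ^ (4 * d * m))⁻¹) ≠ 0 := by
        rw [PowerSeries.constantCoeff_inv]; exact inv_ne_zero hc4
      rw [LD_pow (hG d hd m hm) s, LD_mul hc2 hc4', LD_inv hc4, map_nsmul, map_add, map_neg,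
        coeff_LD_one_sub_X_pow _ _ h2 hn1, coeff_LD_one_sub_X_pow _ _ h4 hn1,
        nsmul_eq_mul]
      congr 1
      split_ifs <;> ring
    rw [Finset.sum_congr rfl hterm, ← Finset.mul_sum]
    apply mul_nonpos_of_nonneg_of_nonpos (by positivity)
    rw [Finset.sum_sub_distrib]
    apply sub_nonpos.2
    rw [← Finset.sum_filter, ← Finset.sum_filter]
    have hsub : (Finset.filter (fun m => 4 * d * m ∣ n) (Finset.Icc 1 n)).image
        (fun m => 2 * m) ⊆ Finset.filter (fun m => 2 * d * m ∣ n) (Finset.Icc 1 n) := by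
      intro j hj
      simp only [Finset.mem_image, Finset.mem_filter, Finset.mem_Icc] at hj ⊢
      obtain ⟨m, ⟨⟨hm1, hm2⟩, hdvd⟩, rfl⟩ := hj
      have hle : 4 * d * m ≤ n := Nat.le_of_dvd (by omega) hdvd
      refine ⟨⟨by omega, by nlinarith⟩, ?_⟩
      have he : 2 * d * (2 * m) = 4 * d * m := by ring
      rw [he]; exact hdvd
    calc ∑ m ∈ Finset.filter (fun m => 4 * d * m ∣ n) (Finset.Icc 1 n), ((4 * d * m : ℕ) : ℚ)
        = ∑ j ∈ (Finset.filter (fun m => 4 * d * m ∣ n) (Finset.Icc 1 n)).image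
            (fun m => 2 * m), ((2 * d * j : ℕ) : ℚ) := by
          rw [Finset.sum_image (by intro a _ b _ h; simp only at h; omega)]
          exact Finset.sum_congr rfl fun m hm => by push_cast; ring
      _ ≤ ∑ j ∈ Finset.filter (fun m => 2 * d * m ∣ n) (Finset.Icc 1 n), ((2 * d * j : ℕ) : ℚ) :=
          Finset.sum_le_sum_of_subset_of_nonneg hsub (fun j _ _ => by positivity)
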